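/- Let (a_k) be a sequence of real numbers bounded above, increasing, with a_{k+1} − a_k ≥ c·b_k for some c > 0 and nonnegative reals b_k. Then (a_k) converges to some limit a*, Σ_k b_k < ∞, and b_k → 0. Moreover, if additionally b_k ≥ 2λ·(a* − a_k) eventually for some λ > 0 with 2cλ < 1, then a* − a_{k+1} ≤ (1 − 2cλ)(a* − a_k) eventually; i.e., a_k converges to a* at least Q-linearly. -/
import Mathlib


open Filter

/-- Abstract convergence-rate argument: an increasing sequence `a` bounded above with
`a_{k+1} − a_k ≥ c·b_k`, `b_k ≥ 0`, `c > 0`, converges to some `a*`, with `Σ b_k < ∞`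
and `b_k → 0`; moreover if eventually `b_k ≥ 2λ(a* − a_k)` with `λ > 0`, `2cλ < 1`,
then eventually `a* − a_{k+1} ≤ (1 − 2cλ)(a* − a_k)` (Q-linear convergence). -/
theorem stmt_14 (a b : ℕ → ℝ) (hbdd : BddAbove (Set.range a)) (hmono : Monotone a)
    (c : ℝ) (hc : 0 < c) (hb : ∀ k, 0 ≤ b k)
    (hincr : ∀ k, a (k + 1) - a k ≥ c * b k) :
    ∃ astar : ℝ, Tendsto a atTop (nhds astar) ∧ Summable b ∧
      Tendsto b atTop (nhds 0) ∧
      ∀ lam : ℝ, 0 < lam → 2 * c * lam < 1 →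
        (∀ᶠ k in atTop, b k ≥ 2 * lam * (astar - a k)) →
        ∀ᶠ k in atTop, astar - a (k + 1) ≤ (1 - 2 * c * lam) * (astar - a k) := by
  have hconv' := tendsto_atTop_ciSup hmono hbdd
  set astar := ⨆ n, a n with hast
  have hM : ∃ M, ∀ n, a n ≤ M := by
    obtain ⟨M, hM⟩ := hbdd
    exact ⟨M, fun n => hM ⟨n, rfl⟩⟩
  obtain ⟨M, hM⟩ := hM
  -- Summable b
  have hsum : Summable b := by
    apply summable_of_sum_range_le hb
    intro n
    have key : ∀ n, c * ∑ i ∈ Finset.range n, b i ≤ a n - a 0 := by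
      intro n
      induction n with
      | zero => simp
      | succ n ih =>
        rw [Finset.sum_range_succ, mul_add]
        have := hincr n
        linarith
    have := key n
    have h2 : c * ∑ i ∈ Finset.range n, b i ≤ M - a 0 := le_trans this (by linarith [hM n])
    calc ∑ i ∈ Finset.range n, b i = (c * ∑ i ∈ Finset.range n, b i) / c := by
          field_simp
      _ ≤ (M - a 0) / c := by apply div_le_div_of_nonneg_right h2 hc.le |>.trans_eq rfl
  refine ⟨astar, hconv', hsum, hsum.tendsto_atTop_zero, ?_⟩
  intro lam hlam h2cl hev
  filter_upwards [hev] with k hk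
  have h1 := hincr k
  nlinarith [hk, hb k, hc.le]
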